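/- arXiv:2408.04544 — 3 statements merged into one kernel-verified Lean document; each statement's English description precedes it below -/
import Mathlib

section
/- Let (X, d, μ) be a space of homogeneous type and let p : X → [1, ∞) be a measurable exponent with 1 ≤ p₋ ≤ p₊ < ∞ that is globally log-Hölder continuous. Then sup over all balls B ⊆ X of μ(B)^{p₋(B) − p₊(B)} is finite, with bound depending only on p(·) and the space. -/
noncomputable section
open MeasureTheory ENNReal Set

/-- quasi-metric ball -/
def qball {X : Type*} (d : X → X → ℝ) (x : X) (r : ℝ) : Set X := {y | d x y < r}

/-- supremum of an exponent function over a set -/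
def expSup {X : Type*} (p : X → ℝ) (B : Set X) : ℝ := sSup (p '' B)

/-- infimum of an exponent function over a set -/
def expInf {X : Type*} (p : X → ℝ) (B : Set X) : ℝ := sInf (p '' B)

/-!
Write `osc B = p₊(B) - p₋(B)`; the claim is that `osc B · log (1 / μ B)` is bounded. Doubling
from the unit ball around `x₀` gives
`log (1 / μ B(x, R)) ≲ 1 + log (1 + d(x₀, x) / R) + log (1 + 1 / R)`.
The last term is paid for by the local log-Hölder bound `osc B(x, R) ≲ 1 / log (e + 1 / R)` on
small balls, the middle one by the decay `osc ≲ 1 / log (e + d(x₀, x))` on balls that are far from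
`x₀` compared to their radius; on the remaining balls it is bounded.

Since `d` may vanish off the diagonal, a small ball with no point at small positive distance from
its centre is a class of points at distance zero, on which `p` is not controlled at all. Such a
ball equals its double, so doubling its radius until it either contains such a point or exceeds a
fixed threshold does not change the ball.
-/

structure IsQuasiMetric {X : Type*} (d : X → X → ℝ) (A₀ : ℝ) : Prop where
  one_le_const : 1 ≤ A₀
  dist_self : ∀ x, d x x = 0
  symm : ∀ x y, d x y = d y x
  triangle : ∀ x y z, d x y ≤ A₀ * (d x z + d z y)

structure IsDoubling {X : Type*} [MeasurableSpace X] (d : X → X → ℝ) (μ : Measure X) (Cμ : ℝ) :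
    Prop where
  one_le_const : 1 ≤ Cμ
  measure_qball_pos : ∀ x r, 0 < r → 0 < μ (qball d x r)
  measure_qball_lt_top : ∀ x r, 0 < r → μ (qball d x r) < ⊤
  measure_qball_two_mul_le : ∀ x r, 0 < r →
    μ (qball d x (2 * r)) ≤ ENNReal.ofReal Cμ * μ (qball d x r)

def expOsc {X : Type*} (p : X → ℝ) (B : Set X) : ℝ := expSup p B - expInf p B

def IsLocallyLogHolder {X : Type*} (d : X → X → ℝ) (p : X → ℝ) (C : ℝ) : Prop :=
  ∀ x y, 0 < d x y → d x y < 1 / 2 → |p x - p y| ≤ C / Real.log (Real.exp 1 + 1 / d x y)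

def IsLogHolderAtInfty {X : Type*} (d : X → X → ℝ) (p : X → ℝ) (x₀ : X) (pinfty C : ℝ) : Prop :=
  ∀ x, |p x - pinfty| ≤ C / Real.log (Real.exp 1 + d x₀ x)

theorem qball_mono {X : Type*} {d : X → X → ℝ} (x : X) {r r' : ℝ} (h : r ≤ r') :
    qball d x r ⊆ qball d x r' :=
  fun _ hu => lt_of_lt_of_le hu h

namespace IsQuasiMetric

variable {X : Type*} {d : X → X → ℝ} {A₀ : ℝ}

theorem const_pos (hd : IsQuasiMetric d A₀) : 0 < A₀ :=
  zero_lt_one.trans_le hd.one_le_const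

theorem dist_nonneg (hd : IsQuasiMetric d A₀) (x y : X) : 0 ≤ d x y := by
  have h := hd.triangle x x y
  rw [hd.dist_self, hd.symm y x] at h
  nlinarith [hd.const_pos]

theorem mem_qball_self (hd : IsQuasiMetric d A₀) (x : X) {r : ℝ} (hr : 0 < r) :
    x ∈ qball d x r := by
  simpa [qball, hd.dist_self] using hr

theorem qball_nonempty (hd : IsQuasiMetric d A₀) (x : X) {r : ℝ} (hr : 0 < r) :
    (qball d x r).Nonempty :=
  ⟨x, hd.mem_qball_self x hr⟩

theorem qball_subset_qball (hd : IsQuasiMetric d A₀) (x₀ x : X) (s : ℝ) :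
    qball d x₀ s ⊆ qball d x (A₀ * (d x₀ x + s)) := by
  intro u (hu : d x₀ u < s)
  have h := hd.triangle x u x₀
  rw [hd.symm x x₀] at h
  exact h.trans_lt (by nlinarith [hd.const_pos])

theorem dist_le_of_dist_eq_zero (hd : IsQuasiMetric d A₀) {y z : X} (h : d y z = 0) (u : X) :
    d z u ≤ A₀ * d y u := by
  simpa [hd.symm z y, h] using hd.triangle z u y

theorem exists_pos_dist_lt_or_qball_two_mul_eq (hd : IsQuasiMetric d A₀) (x : X) {r : ℝ}
    (hr : 0 < r) : (∃ w, 0 < d x w ∧ d x w < 2 * r) ∨ qball d x (2 * r) = qball d x r := by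
  by_cases h : ∃ w, 0 < d x w ∧ d x w < 2 * r
  · exact Or.inl h
  push Not at h
  refine Or.inr (Subset.antisymm (fun u (hu : d x u < 2 * r) => ?_) (qball_mono x (by linarith)))
  rcases (hd.dist_nonneg x u).eq_or_lt with hxu | hxu
  · show d x u < r
    rw [← hxu]
    exact hr
  · exact absurd hu (h u hxu).not_gt

theorem exists_pos_dist_lt (hd : IsQuasiMetric d A₀) {x y w : X} {r : ℝ}
    (hy : y ∈ qball d x r) (hw : 0 < d x w) (hw' : d x w < 2 * r) :
    ∃ u, 0 < d y u ∧ d y u < 2 * A₀ * r := by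
  have hxy : d x y < r := hy
  rcases (hd.dist_nonneg y x).eq_or_lt with hyx | hyx
  · have hxy0 : d x y = 0 := by rw [hd.symm, ← hyx]
    have hxw := hd.dist_le_of_dist_eq_zero hyx.symm w
    have hyw := hd.dist_le_of_dist_eq_zero hxy0 w
    exact ⟨w, by nlinarith [hd.const_pos], by nlinarith [hd.const_pos]⟩
  · refine ⟨x, hyx, ?_⟩
    rw [hd.symm]
    nlinarith [hd.one_le_const, hd.dist_nonneg x y]

theorem div_le_dist_of_mem_qball (hd : IsQuasiMetric d A₀) {x₀ x u : X} {R : ℝ}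
    (hu : u ∈ qball d x R) (hfar : 2 * A₀ * R ≤ d x₀ x) : d x₀ x / (2 * A₀) ≤ d x₀ u := by
  have hxu : d x u < R := hu
  have h := hd.triangle x₀ x u
  rw [hd.symm u x] at h
  rw [div_le_iff₀ (by linarith [hd.const_pos])]
  nlinarith [hd.const_pos]

end IsQuasiMetric

section Oscillation

variable {X : Type*} {p : X → ℝ} {S : Set X}

theorem expOsc_le_of_forall_sub_le {β : ℝ} (hS : S.Nonempty)
    (h : ∀ y ∈ S, ∀ z ∈ S, p y - p z ≤ β) : expOsc p S ≤ β := by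
  rw [expOsc, sub_le_iff_le_add]
  refine csSup_le (hS.image p) ?_
  rintro _ ⟨y, hy, rfl⟩
  rw [← sub_le_iff_le_add']
  refine le_csInf (hS.image p) ?_
  rintro _ ⟨z, hz, rfl⟩
  linarith [h y hy z hz]

theorem expOsc_nonneg (hS : S.Nonempty) (ha : BddAbove (p '' S)) (hb : BddBelow (p '' S)) :
    0 ≤ expOsc p S :=
  sub_nonneg.2 (csInf_le_csSup (hS.image p) hb ha)

end Oscillation

theorem one_le_log_exp_one_add {t : ℝ} (ht : 0 ≤ t) : 1 ≤ Real.log (Real.exp 1 + t) := by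
  rw [Real.le_log_iff_exp_le (by positivity)]
  exact le_add_of_nonneg_right ht

theorem div_log_exp_one_add_one_div_le {C s ρ : ℝ} (hC : 0 ≤ C) (hs : 0 < s) (hsρ : s ≤ ρ) :
    C / Real.log (Real.exp 1 + 1 / s) ≤ C / Real.log (Real.exp 1 + 1 / ρ) := by
  have hρ : 0 < ρ := hs.trans_le hsρ
  have hlog := one_le_log_exp_one_add (one_div_pos.2 hρ).le
  exact div_le_div_of_nonneg_left hC (by linarith) (Real.log_le_log (by positivity) (by gcongr))

theorem log_le_log_add_log_exp_one_add {b k t : ℝ} (hb : 0 < b) (hk : 0 < k) (ht : 0 ≤ t)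
    (h : b ≤ k * (Real.exp 1 + t)) : Real.log b ≤ Real.log k + Real.log (Real.exp 1 + t) := by
  rw [← Real.log_mul hk.ne' (by positivity)]
  exact Real.log_le_log hb h

theorem mul_le_mul_add_one_of_le_div {a b C Λ k : ℝ} (ha : 0 ≤ a) (hC : 0 ≤ C) (hk : 0 ≤ k)
    (hΛ : 1 ≤ Λ) (haΛ : a ≤ C / Λ) (hb : b ≤ k + Λ) : a * b ≤ C * (k + 1) := by
  have haC : a ≤ C := haΛ.trans (div_le_self hC hΛ)
  have haΛ' : a * Λ ≤ C := (le_div_iff₀ (by linarith)).1 haΛ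
  calc a * b ≤ a * (k + Λ) := mul_le_mul_of_nonneg_left hb ha
    _ = a * k + a * Λ := by ring
    _ ≤ C * k + C := add_le_add (mul_le_mul_of_nonneg_right haC hk) haΛ'
    _ = C * (k + 1) := by ring

theorem mul_log_one_add_inv_le {a Q C κ ρ R : ℝ} (ha : 0 ≤ a) (haQ : a ≤ Q) (hC : 0 ≤ C)
    (hκ : 1 ≤ κ) (hρ : 0 ≤ ρ) (hR : 0 < R)
    (h : 1 < ρ * R ∨ a ≤ C / Real.log (Real.exp 1 + 1 / (κ * R))) :
    a * Real.log (1 + R⁻¹) ≤ Q * Real.log (1 + ρ) + C * (Real.log κ + 1) := by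
  have hQ : 0 ≤ Q := ha.trans haQ
  have hℓ : 0 ≤ Real.log (1 + R⁻¹) := Real.log_nonneg (by linarith [inv_pos.2 hR])
  have hlogκ : 0 ≤ Real.log κ := Real.log_nonneg hκ
  rcases h with hρR | hloc
  · have hRρ : R⁻¹ < ρ := (inv_lt_iff_one_lt_mul₀ hR).2 (by linarith [mul_comm ρ R])
    have hℓρ : Real.log (1 + R⁻¹) ≤ Real.log (1 + ρ) :=
      Real.log_le_log (by positivity) (by linarith)
    linarith [mul_le_mul haQ hℓρ hℓ hQ, mul_nonneg hC hlogκ]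
  · have hℓκ : Real.log (1 + R⁻¹) ≤ Real.log κ + Real.log (Real.exp 1 + 1 / (κ * R)) := by
      refine log_le_log_add_log_exp_one_add (by positivity) (by linarith) (by positivity) ?_
      rw [mul_add, one_div, mul_inv, ← mul_assoc, mul_inv_cancel₀ (by linarith), one_mul]
      nlinarith [Real.add_one_le_exp 1]
    have := mul_le_mul_add_one_of_le_div ha hC hlogκ
      (one_le_log_exp_one_add (by positivity)) hloc hℓκ
    linarith [mul_nonneg hQ (Real.log_nonneg (by linarith : 1 ≤ 1 + ρ))]

theorem mul_log_one_add_div_le {a Q C A m R : ℝ} (ha : 0 ≤ a) (haQ : a ≤ Q) (hC : 0 ≤ C)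
    (hA : 1 ≤ A) (hm : 0 ≤ m) (hR : 0 < R)
    (hfar : A * R ≤ m → a ≤ C / Real.log (Real.exp 1 + m / A)) :
    a * Real.log (1 + m / R) ≤
      Q * Real.log (1 + A) + C * (Real.log A + 1) + a * Real.log (1 + R⁻¹) := by
  have hQ : 0 ≤ Q := ha.trans haQ
  have hlogA : 0 ≤ Real.log (1 + A) := Real.log_nonneg (by linarith)
  have hℓ : 0 ≤ Real.log (1 + R⁻¹) := Real.log_nonneg (by linarith [inv_pos.2 hR])
  by_cases hmR : A * R ≤ m
  · have hsplit : Real.log (1 + m / R) ≤ Real.log (1 + m) + Real.log (1 + R⁻¹) := by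
      rw [← Real.log_mul (by linarith) (by positivity)]
      refine Real.log_le_log (by positivity) ?_
      have : (1 + m) * (1 + R⁻¹) = 1 + m / R + (m + R⁻¹) := by ring
      linarith [inv_pos.2 hR]
    have hfar' : Real.log (1 + m) ≤ Real.log A + Real.log (Real.exp 1 + m / A) := by
      refine log_le_log_add_log_exp_one_add (by linarith) (by linarith) (by positivity) ?_
      rw [mul_add, mul_div_cancel₀ _ (by linarith)]
      nlinarith [Real.add_one_le_exp 1]
    have := mul_le_mul_add_one_of_le_div ha hC (Real.log_nonneg hA)
      (one_le_log_exp_one_add (by positivity)) (hfar hmR) hfar'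
    linarith [mul_le_mul_of_nonneg_left hsplit ha, mul_nonneg hQ hlogA]
  · have hL : Real.log (1 + m / R) ≤ Real.log (1 + A) :=
      Real.log_le_log (by positivity) (by linarith [(div_le_iff₀ hR).2 (not_le.1 hmR).le])
    linarith [mul_le_mul haQ hL (Real.log_nonneg (by linarith [div_nonneg hm hR.le])) hQ,
      mul_nonneg ha hℓ, mul_nonneg hC (Real.log_nonneg hA)]

theorem exists_nat_le_two_pow {q : ℝ} (hq : 1 ≤ q) :
    ∃ n : ℕ, q ≤ 2 ^ n ∧ n * Real.log 2 ≤ Real.log q + Real.log 2 := by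
  obtain ⟨n, hnq, hqn⟩ := exists_nat_pow_near hq one_lt_two
  refine ⟨n + 1, hqn.le, ?_⟩
  rw [Nat.cast_succ, add_mul, one_mul, ← Real.log_pow]
  gcongr

theorem exists_le_eq_of_forall_or_two_mul_eq {α : Type*} (B : ℝ → α) (good : ℝ → Prop)
    {r₁ : ℝ} (h : ∀ s, 0 < s → s ≤ r₁ → good s ∨ B (2 * s) = B s) {r : ℝ} (hr : 0 < r) :
    ∃ R, r ≤ R ∧ B R = B r ∧ (r₁ < R ∨ good R) := by
  obtain ⟨n, hn⟩ := pow_unbounded_of_one_lt (r₁ / r) one_lt_two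
  rw [div_lt_iff₀ hr] at hn
  induction n generalizing r with
  | zero => exact ⟨r, le_rfl, rfl, Or.inl (by simpa using hn)⟩
  | succ n ih =>
    rcases le_or_gt r r₁ with hr₁ | hr₁
    · rcases h r hr hr₁ with hgood | heq
      · exact ⟨r, le_rfl, rfl, Or.inr hgood⟩
      · obtain ⟨R, hR, hBR, hgoodR⟩ :=
          ih (r := 2 * r) (by positivity) (by rwa [← mul_assoc, ← pow_succ])
        exact ⟨R, by linarith, hBR.trans heq, hgoodR⟩
    · exact ⟨r, le_rfl, rfl, Or.inl hr₁⟩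

namespace IsQuasiMetric

variable {X : Type*} {d : X → X → ℝ} {A₀ : ℝ} {p : X → ℝ}

theorem expOsc_qball_le_of_isLocallyLogHolder (hd : IsQuasiMetric d A₀) {C : ℝ} (hC : 0 ≤ C)
    (hp : IsLocallyLogHolder d p C) {x w : X} {r : ℝ} (hr : 2 * A₀ ^ 2 * r < 1 / 2)
    (hw : 0 < d x w) (hw' : d x w < 2 * r) :
    expOsc p (qball d x r) ≤ 2 * C / Real.log (Real.exp 1 + 1 / (2 * A₀ ^ 2 * r)) := by
  have hr0 : 0 < r := by linarith
  have hA₀ := hd.one_le_const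
  set ω := C / Real.log (Real.exp 1 + 1 / (2 * A₀ ^ 2 * r))
  have hω : 0 ≤ ω :=
    div_nonneg hC (by linarith [one_le_log_exp_one_add (by positivity : 0 ≤ 1 / (2 * A₀ ^ 2 * r))])
  have hclose : ∀ y z, 0 < d y z → d y z ≤ 2 * A₀ ^ 2 * r → |p y - p z| ≤ ω := fun y z h h' =>
    (hp y z h (h'.trans_lt hr)).trans (div_log_exp_one_add_one_div_le hC h h')
  rw [mul_div_assoc]
  refine expOsc_le_of_forall_sub_le (hd.qball_nonempty x hr0) fun y hy z hz => ?_
  refine (le_abs_self _).trans ?_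
  rcases (hd.dist_nonneg y z).eq_or_lt with hyz | hyz
  · -- `p` is only controlled at positive distance, so pass through a point `u` at positive
    -- distance from both `y` and `z`.
    obtain ⟨u, hu, hu'⟩ := hd.exists_pos_dist_lt hy hw hw'
    have hzu := hd.dist_le_of_dist_eq_zero hyz.symm u
    have hyu : d y u ≤ A₀ * d z u := hd.dist_le_of_dist_eq_zero (by rw [hd.symm, ← hyz]) u
    calc |p y - p z| ≤ |p y - p u| + |p z - p u| :=
          (abs_sub_le _ _ _).trans_eq (by rw [abs_sub_comm (p u)])
      _ ≤ ω + ω :=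
          add_le_add (hclose y u hu (by nlinarith)) (hclose z u (by nlinarith) (by nlinarith))
      _ = 2 * ω := (two_mul ω).symm
  · have hyx : d y x < r := by rw [hd.symm]; exact hy
    have hxz : d x z < r := hz
    have := hd.triangle y z x
    linarith [hclose y z hyz (by nlinarith)]

theorem exists_qball_eq_and_expOsc_le (hd : IsQuasiMetric d A₀) {C : ℝ} (hC : 0 ≤ C)
    (hp : IsLocallyLogHolder d p C) (x : X) {r : ℝ} (hr : 0 < r) :
    ∃ R, r ≤ R ∧ qball d x R = qball d x r ∧ (1 < 8 * A₀ ^ 2 * R ∨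
      expOsc p (qball d x R) ≤ 2 * C / Real.log (Real.exp 1 + 1 / (2 * A₀ ^ 2 * R))) := by
  have hA₀ : 0 < 8 * A₀ ^ 2 := by positivity [hd.const_pos]
  have hstep : ∀ s, 0 < s → s ≤ 1 / (8 * A₀ ^ 2) →
      expOsc p (qball d x s) ≤ 2 * C / Real.log (Real.exp 1 + 1 / (2 * A₀ ^ 2 * s)) ∨
        qball d x (2 * s) = qball d x s := by
    intro s hs hs₁
    have hsmall : 2 * A₀ ^ 2 * s < 1 / 2 := by
      rw [le_div_iff₀ hA₀] at hs₁
      linarith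
    exact (hd.exists_pos_dist_lt_or_qball_two_mul_eq x hs).imp
      (fun ⟨_, hw, hw'⟩ => hd.expOsc_qball_le_of_isLocallyLogHolder hC hp hsmall hw hw') id
  obtain ⟨R, hrR, hball, hgood⟩ := exists_le_eq_of_forall_or_two_mul_eq (qball d x) _ hstep hr
  refine ⟨R, hrR, hball, hgood.imp_left fun h => ?_⟩
  rwa [div_lt_iff₀ hA₀, mul_comm] at h

theorem expOsc_qball_le_of_isLogHolderAtInfty (hd : IsQuasiMetric d A₀) {x₀ : X} {pinfty C : ℝ}
    (hC : 0 ≤ C) (hp : IsLogHolderAtInfty d p x₀ pinfty C) {x : X} {R : ℝ} (hR : 0 < R)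
    (hfar : 2 * A₀ * R ≤ d x₀ x) :
    expOsc p (qball d x R) ≤ 2 * C / Real.log (Real.exp 1 + d x₀ x / (2 * A₀)) := by
  have hA₀ := hd.const_pos
  have hm : 0 ≤ d x₀ x / (2 * A₀) := div_nonneg (hd.dist_nonneg x₀ x) (by positivity)
  have hω : ∀ u ∈ qball d x R,
      |p u - pinfty| ≤ C / Real.log (Real.exp 1 + d x₀ x / (2 * A₀)) := by
    intro u hu
    refine (hp u).trans (div_le_div_of_nonneg_left hC (by linarith [one_le_log_exp_one_add hm]) ?_)
    exact Real.log_le_log (by positivity) (by linarith [hd.div_le_dist_of_mem_qball hu hfar])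
  rw [mul_div_assoc]
  refine expOsc_le_of_forall_sub_le (hd.qball_nonempty x hR) fun y hy z hz => ?_
  linarith [abs_le.1 (hω y hy), abs_le.1 (hω z hz)]

end IsQuasiMetric

namespace IsDoubling

variable {X : Type*} [MeasurableSpace X] {d : X → X → ℝ} {μ : Measure X} {Cμ : ℝ}

theorem toReal_measure_qball_pos (hμ : IsDoubling d μ Cμ) (x : X) {r : ℝ} (hr : 0 < r) :
    0 < (μ (qball d x r)).toReal :=
  ENNReal.toReal_pos (hμ.measure_qball_pos x r hr).ne' (hμ.measure_qball_lt_top x r hr).ne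

theorem measure_qball_two_pow_mul_le (hμ : IsDoubling d μ Cμ) (x : X) {r : ℝ} (hr : 0 < r)
    (n : ℕ) : μ (qball d x (2 ^ n * r)) ≤ ENNReal.ofReal Cμ ^ n * μ (qball d x r) := by
  induction n with
  | zero => simp
  | succ n ih =>
    calc μ (qball d x (2 ^ (n + 1) * r)) = μ (qball d x (2 * (2 ^ n * r))) := by ring_nf
      _ ≤ ENNReal.ofReal Cμ * μ (qball d x (2 ^ n * r)) :=
          hμ.measure_qball_two_mul_le x _ (by positivity)
      _ ≤ ENNReal.ofReal Cμ * (ENNReal.ofReal Cμ ^ n * μ (qball d x r)) := by gcongr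
      _ = ENNReal.ofReal Cμ ^ (n + 1) * μ (qball d x r) := by ring

theorem log_measure_qball_le {A₀ : ℝ} (hμ : IsDoubling d μ Cμ) (hd : IsQuasiMetric d A₀)
    (x₀ x : X) {R : ℝ} (hR : 0 < R) {n : ℕ} (hn : A₀ * (d x₀ x + 1) ≤ 2 ^ n * R) :
    Real.log (μ (qball d x₀ 1)).toReal ≤ n * Real.log Cμ + Real.log (μ (qball d x R)).toReal := by
  have hCμ : 0 < Cμ := zero_lt_one.trans_le hμ.one_le_const
  have hsub : qball d x₀ 1 ⊆ qball d x (2 ^ n * R) :=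
    (hd.qball_subset_qball x₀ x 1).trans (qball_mono x hn)
  have hle := (measure_mono hsub).trans (hμ.measure_qball_two_pow_mul_le x hR n)
  have hreal : (μ (qball d x₀ 1)).toReal ≤ Cμ ^ n * (μ (qball d x R)).toReal := by
    have := ENNReal.toReal_mono (ENNReal.mul_ne_top (ENNReal.pow_ne_top ENNReal.ofReal_ne_top)
      (hμ.measure_qball_lt_top x R hR).ne) hle
    rwa [ENNReal.toReal_mul, ENNReal.toReal_pow, ENNReal.toReal_ofReal hCμ.le] at this
  calc Real.log (μ (qball d x₀ 1)).toReal
      ≤ Real.log (Cμ ^ n * (μ (qball d x R)).toReal) :=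
        Real.log_le_log (hμ.toReal_measure_qball_pos x₀ one_pos) hreal
    _ = n * Real.log Cμ + Real.log (μ (qball d x R)).toReal := by
      rw [Real.log_mul (by positivity) (hμ.toReal_measure_qball_pos x hR).ne', Real.log_pow]

/-- Reaching `B(x, R)` from the unit ball around `x₀` takes about
`log₂ (A₀ (1 + d x₀ x / R) (1 + R⁻¹))` doublings, each costing a factor `Cμ`. -/
theorem exists_neg_log_measure_qball_le {A₀ : ℝ} (hμ : IsDoubling d μ Cμ)
    (hd : IsQuasiMetric d A₀) (x₀ : X) :
    ∃ c, 0 ≤ c ∧ ∀ x R, 0 < R → -Real.log (μ (qball d x R)).toReal ≤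
      c * (1 + Real.log (1 + d x₀ x / R) + Real.log (1 + R⁻¹)) := by
  set κ := Real.log Cμ / Real.log 2
  set m₀ := (μ (qball d x₀ 1)).toReal
  have hlog2 : 0 < Real.log 2 := Real.log_pos one_lt_two
  have hlogCμ : 0 ≤ Real.log Cμ := Real.log_nonneg hμ.one_le_const
  have hκ : 0 ≤ κ := div_nonneg hlogCμ hlog2.le
  have hκ2 : κ * Real.log 2 = Real.log Cμ := div_mul_cancel₀ _ hlog2.ne'
  have hA₀ : 0 ≤ Real.log A₀ := Real.log_nonneg hd.one_le_const
  refine ⟨κ * (1 + Real.log A₀) + Real.log Cμ + |Real.log m₀|, by positivity, fun x R hR => ?_⟩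
  set m := d x₀ x
  have hmR : 0 ≤ m / R := div_nonneg (hd.dist_nonneg x₀ x) hR.le
  have hR' : 0 < R⁻¹ := inv_pos.2 hR
  set q := A₀ * ((1 + m / R) * (1 + R⁻¹))
  have hq : 1 ≤ q := one_le_mul_of_one_le_of_one_le hd.one_le_const
    (one_le_mul_of_one_le_of_one_le (by linarith) (by linarith))
  obtain ⟨n, hqn, hn⟩ := exists_nat_le_two_pow hq
  have hcover : A₀ * (m + 1) ≤ 2 ^ n * R := by
    have hqR : q * R = A₀ * (m + 1) + A₀ * (R + m / R) := by
      simp only [q]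
      field_simp
      ring
    nlinarith [mul_le_mul_of_nonneg_right hqn hR.le, hd.const_pos]
  have hlogq : Real.log q = Real.log A₀ + Real.log (1 + m / R) + Real.log (1 + R⁻¹) := by
    rw [Real.log_mul hd.const_pos.ne' (by positivity), Real.log_mul (by positivity) (by positivity),
      add_assoc]
  have hnlog : n * Real.log Cμ ≤
      κ * (Real.log A₀ + Real.log (1 + m / R) + Real.log (1 + R⁻¹)) + Real.log Cμ := by
    calc n * Real.log Cμ = κ * (n * Real.log 2) := by rw [← hκ2]; ring
      _ ≤ κ * (Real.log q + Real.log 2) := mul_le_mul_of_nonneg_left hn hκ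
      _ = _ := by rw [mul_add, hκ2, hlogq]
  have hL : 0 ≤ Real.log (1 + m / R) := Real.log_nonneg (by linarith)
  have hℓ : 0 ≤ Real.log (1 + R⁻¹) := Real.log_nonneg (by linarith)
  have hcoef : 0 ≤ κ * Real.log A₀ + Real.log Cμ + |Real.log m₀| := by positivity
  linarith [hμ.log_measure_qball_le hd x₀ x hR hcover, neg_le_abs (Real.log m₀),
    mul_nonneg hcoef hL, mul_nonneg hcoef hℓ]

end IsDoubling

/-- Diening-type condition: if `p(·)` is globally log-Hölder continuous with
`1 ≤ p₋ ≤ p₊ < ∞` on a space of homogeneous type, then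
`sup_B μ(B)^{p₋(B) − p₊(B)} < ∞`. -/
theorem diening_condition {X : Type*} [MeasurableSpace X]
    (d : X → X → ℝ) (μ : Measure X) (A₀ Cμ : ℝ) (hA₀ : 1 ≤ A₀) (hCμ : 1 ≤ Cμ)
    (hd_self : ∀ x, d x x = 0)
    (hd_symm : ∀ x y, d x y = d y x)
    (hd_tri : ∀ x y z, d x y ≤ A₀ * (d x z + d z y))
    (h_pos : ∀ x r, 0 < r → 0 < μ (qball d x r))
    (h_fin : ∀ x r, 0 < r → μ (qball d x r) < ⊤)
    (h_doubling : ∀ x r, 0 < r →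
      μ (qball d x (2 * r)) ≤ ENNReal.ofReal Cμ * μ (qball d x r))
    (p : X → ℝ) (P : ℝ)
    (hp_lo : ∀ x, 1 ≤ p x) (hp_hi : ∀ x, p x ≤ P)
    -- local log-Hölder continuity
    (CL : ℝ) (hCL : 0 < CL)
    (hLH0 : ∀ x y, 0 < d x y → d x y < 1 / 2 →
      |p x - p y| ≤ CL / Real.log (Real.exp 1 + 1 / d x y))
    -- log-Hölder continuity at infinity with respect to a base point x₀
    (x₀ : X) (pinfty Cinf : ℝ) (hCinf : 0 < Cinf)
    (hLHinf : ∀ x, |p x - pinfty| ≤ Cinf / Real.log (Real.exp 1 + d x₀ x)) :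
    ∃ C : ℝ, 0 < C ∧ ∀ x r, 0 < r →
      ((μ (qball d x r)).toReal) ^ (expInf p (qball d x r) - expSup p (qball d x r)) ≤ C := by
  have hd : IsQuasiMetric d A₀ := ⟨hA₀, hd_self, hd_symm, hd_tri⟩
  have hμ : IsDoubling d μ Cμ := ⟨hCμ, h_pos, h_fin, h_doubling⟩
  obtain ⟨c, hc, hmass⟩ := hμ.exists_neg_log_measure_qball_le hd x₀
  set Q := P - 1
  set K := Q * Real.log (1 + 2 * A₀) + 2 * Cinf * (Real.log (2 * A₀) + 1)
  set T := Q * Real.log (1 + 8 * A₀ ^ 2) + 2 * CL * (Real.log (2 * A₀ ^ 2) + 1)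
  refine ⟨Real.exp (c * (Q + K + 2 * T)), Real.exp_pos _, fun x r hr => ?_⟩
  obtain ⟨R, hrR, hball, hgood⟩ := hd.exists_qball_eq_and_expOsc_le hCL.le hLH0 x hr
  have hR : 0 < R := hr.trans_le hrR
  set a := expOsc p (qball d x R)
  have ha : 0 ≤ a := expOsc_nonneg (hd.qball_nonempty x hR)
    ⟨P, forall_mem_image.2 fun y _ => hp_hi y⟩ ⟨1, forall_mem_image.2 fun y _ => hp_lo y⟩
  have haQ : a ≤ Q := expOsc_le_of_forall_sub_le (hd.qball_nonempty x hR)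
    fun y _ z _ => by linarith [hp_hi y, hp_lo z]
  have hT := mul_log_one_add_inv_le ha haQ (by positivity) (by nlinarith) (by positivity) hR hgood
  have hK := mul_log_one_add_div_le ha haQ (by positivity) (by linarith : (1 : ℝ) ≤ 2 * A₀)
    (hd.dist_nonneg x₀ x) hR (hd.expOsc_qball_le_of_isLogHolderAtInfty hCinf.le hLHinf hR)
  rw [← hball, ← neg_sub, Real.rpow_def_of_pos (hμ.toReal_measure_qball_pos x hR),
    Real.exp_le_exp]
  calc Real.log (μ (qball d x R)).toReal * -a = a * -Real.log (μ (qball d x R)).toReal := by ring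
    _ ≤ a * (c * (1 + Real.log (1 + d x₀ x / R) + Real.log (1 + R⁻¹))) :=
      mul_le_mul_of_nonneg_left (hmass x R hR) ha
    _ = c * (a + a * Real.log (1 + d x₀ x / R) + a * Real.log (1 + R⁻¹)) := by ring
    _ ≤ c * (Q + K + 2 * T) := mul_le_mul_of_nonneg_left (by linarith) hc
end
end

section
/- Under the same hypotheses, if the averaging operators 𝒜_{η,B} are uniformly bounded from L^{p₁(·)}(X,ω₁) × ⋯ × L^{p_m(·)}(X,ω_m) to weak-L^{q(·)}(X,ω) over all balls B, then ω⃗ ∈ A_{p⃗(·),q(·)}(X) and [ω⃗]_{A_{p⃗(·),q(·)}} ≲ sup_B ‖𝒜_{η,B}‖, with implicit constant independent of ω⃗. -/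
noncomputable section
open MeasureTheory ENNReal Set

/-- Luxemburg norm on the variable exponent Lebesgue space `L^{p(·)}`. -/
def luxNorm {X : Type*} [MeasurableSpace X] (μ : Measure X) (p : X → ℝ) (f : X → ℝ) : ℝ :=
  sInf {c : ℝ | 0 < c ∧ ∫⁻ x, (ENNReal.ofReal (|f x| / c)) ^ (p x) ∂μ ≤ 1}

/-- pointwise conjugate exponent -/
def conjExp (t : ℝ) : ℝ := t / (t - 1)

/-- multilinear fractional averaging operator `𝒜_{η,B}` over the ball `B` -/
def fracAvg {X : Type*} [MeasurableSpace X] (μ : Measure X) (η : ℝ) (m : ℕ)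
    (B : Set X) (f : Fin m → X → ℝ) (x : X) : ℝ :=
  B.indicator (fun _ =>
    ((μ B).toReal) ^ η * ∏ i, ((μ B).toReal)⁻¹ * ∫ y in B, f i y ∂μ) x

open scoped NNReal

/-! Testing the weak-type bound on a ball `B` with functions `fᵢ` that realise half of the
Luxemburg norm `Lᵢ = ‖ωᵢ⁻¹ χ_B‖_{pᵢ'(·)}` by duality, i.e. `‖ωᵢ fᵢ‖_{pᵢ(·)} ≤ 1` and
`∫_B fᵢ = Lᵢ / 2`, makes `𝒜_{η,B}(f⃗)` the constant `V = μ(B)^η ∏ᵢ Lᵢ / (2 μ(B))` on `B`.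
Its level set at height `V / 2` is `B` itself, so the weak-type inequality at that height
reads `μ(B)^{η-m} ‖w χ_B‖_{q(·)} ∏ᵢ Lᵢ ≤ 2^{m+1} N`.

The test function comes from the definition of the Luxemburg norm: the `pᵢ'(·)`-modular of
`ωᵢ⁻¹ χ_B / (Lᵢ/2)` exceeds `1`, so some simple minorant `φ` of it has `1 < ∫ φ < ∞`, and
`fᵢ = (Lᵢ/2) φ / ∫ φ` works because `φ ≤ b^{p'}` forces `(φ / b)^p ≤ φ`. -/
lemma div_rpow_le_of_le_rpow_conjExp {p a b : ℝ} (hp : 1 < p) (ha : 0 ≤ a) (hb : 0 < b)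
    (hab : a ≤ b ^ conjExp p) : (a / b) ^ p ≤ a := by
  have hconj : conjExp p * (p - 1) = p := by
    unfold conjExp
    field_simp [sub_ne_zero.mpr hp.ne']
  have hpow : a ^ (p - 1) ≤ b ^ p :=
    calc a ^ (p - 1) ≤ (b ^ conjExp p) ^ (p - 1) := Real.rpow_le_rpow ha hab (by linarith)
      _ = b ^ p := by rw [← Real.rpow_mul hb.le, hconj]
  calc (a / b) ^ p = a * a ^ (p - 1) / b ^ p := by
        rw [Real.div_rpow ha hb.le, ← Real.rpow_one_add' ha (by linarith)]
        ring_nf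
    _ ≤ a * b ^ p / b ^ p := by gcongr
    _ = a := by field_simp

lemma rpow_mul_le_div_of_le_rpow_conjExp {p u l κ a : ℝ} (hp : 1 < p) (hu : 0 < u)
    (hl : 0 < l) (hκ : 1 ≤ κ) (ha : 0 ≤ a) (hau : a ≤ (u⁻¹ / l) ^ conjExp p) :
    (u * (l / κ * a)) ^ p ≤ a / κ :=
  have hκ0 : 0 < κ := one_pos.trans_le hκ
  calc (u * (l / κ * a)) ^ p = (a / (u⁻¹ / l)) ^ p / κ ^ p := by
        rw [← Real.div_rpow (by positivity) hκ0.le]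
        congr 1
        field_simp
    _ ≤ a / κ ^ p := by
        gcongr
        exact div_rpow_le_of_le_rpow_conjExp hp ha (by positivity) hau
    _ ≤ a / κ := by
        gcongr
        exact Real.self_le_rpow_of_one_le hκ hp.le

lemma setOf_lt_indicator_const {X : Type*} {B : Set X} {t v : ℝ} (ht : 0 ≤ t) (htv : t < v) :
    {x | t < B.indicator (fun _ => v) x} = B := by
  ext x
  by_cases hx : x ∈ B <;> simp [hx, htv, ht]

section VariableLebesgue

variable {X : Type*} [MeasurableSpace X] {μ : Measure X}

lemma luxNorm_nonneg (p f : X → ℝ) : 0 ≤ luxNorm μ p f :=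
  Real.sInf_nonneg fun _ hc => hc.1.le

lemma luxNorm_le_one {p f : X → ℝ} (h : ∫⁻ x, ENNReal.ofReal |f x| ^ p x ∂μ ≤ 1) :
    luxNorm μ p f ≤ 1 :=
  csInf_le ⟨0, fun _ hc => hc.1.le⟩ ⟨one_pos, by simpa using h⟩

lemma one_lt_lintegral_of_lt_luxNorm {p f : X → ℝ} {c : ℝ} (hc : 0 < c)
    (hcf : c < luxNorm μ p f) : 1 < ∫⁻ x, ENNReal.ofReal (|f x| / c) ^ p x ∂μ := by
  by_contra! h
  exact (csInf_le ⟨0, fun _ hc => hc.1.le⟩ ⟨hc, h⟩ : luxNorm μ p f ≤ c).not_gt hcf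

lemma exists_simpleFunc_le_lt_lintegral_ne_top {F : X → ℝ≥0∞} {B : Set X} (hB : μ B ≠ ∞)
    (hFB : ∀ x ∉ B, F x = 0) {a : ℝ≥0∞} (ha : a < ∫⁻ x, F x ∂μ) :
    ∃ φ : SimpleFunc X ℝ≥0,
      (∀ x, (φ x : ℝ≥0∞) ≤ F x) ∧ a < ∫⁻ x, φ x ∂μ ∧ ∫⁻ x, φ x ∂μ ≠ ∞ := by
  rw [lintegral_eq_nnreal] at ha
  obtain ⟨φ, hφ⟩ := lt_iSup_iff.mp ha
  obtain ⟨hφF, ha⟩ := lt_iSup_iff.mp hφ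
  have hφB : (fun x => (φ x : ℝ≥0∞)).support ⊆ B := fun x hx => by
    by_contra hxB
    exact hx (le_antisymm (hFB x hxB ▸ hφF x) bot_le)
  refine ⟨φ, hφF, by simpa [← SimpleFunc.lintegral_eq_lintegral] using ha, ?_⟩
  rw [← setLIntegral_eq_of_support_subset hφB]
  exact (setLIntegral_lt_top_of_bddAbove hB
    (φ.finite_range.bddAbove.mono (image_subset_range _ _))).ne

lemma setIntegral_coe_eq_toReal_lintegral {B : Set X} (φ : SimpleFunc X ℝ≥0)
    (hφB : ∀ x ∉ B, φ x = 0) : ∫ y in B, (φ y : ℝ) ∂μ = (∫⁻ x, φ x ∂μ).toReal := by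
  rw [integral_eq_lintegral_of_nonneg_ae (ae_of_all _ fun _ => NNReal.coe_nonneg _)
    φ.measurable.coe_nnreal_real.aestronglyMeasurable]
  simp only [ENNReal.ofReal_coe_nnreal]
  rw [setLIntegral_eq_of_support_subset]
  intro x hx
  by_contra hxB
  simp [hφB x hxB] at hx

lemma exists_luxNorm_mul_le_one_setIntegral_eq {B : Set X} (hB : μ B ≠ ∞) {p ω : X → ℝ}
    (hp : ∀ x, 1 < p x) (hω : ∀ x, 0 < ω x) {l : ℝ} (hl : 0 < l)
    (hlL : l < luxNorm μ (fun y => conjExp (p y)) (B.indicator fun y => (ω y)⁻¹)) :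
    ∃ f : X → ℝ, luxNorm μ p (fun x => ω x * f x) ≤ 1 ∧
      ∫ y in B, f y ∂μ = l := by
  have hp' : ∀ x, 0 < conjExp (p x) := fun x =>
    div_pos (by linarith [hp x]) (by linarith [hp x])
  have hFB : ∀ x ∉ B,
      ENNReal.ofReal (|B.indicator (fun y => (ω y)⁻¹) x| / l) ^ conjExp (p x) = 0 :=
    fun x hx => by simp [hx, hp' x]
  obtain ⟨φ, hφF, hφ1, hφtop⟩ := exists_simpleFunc_le_lt_lintegral_ne_top hB hFB
    (one_lt_lintegral_of_lt_luxNorm hl hlL)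
  have hφB : ∀ x ∉ B, φ x = 0 := fun x hx => by simpa [hFB x hx] using hφF x
  set κ := (∫⁻ x, φ x ∂μ).toReal
  have hκ : 1 < κ := by simpa using (ENNReal.toReal_lt_toReal one_ne_top hφtop).mpr hφ1
  refine ⟨fun x => l / κ * φ x, luxNorm_le_one ?_, ?_⟩
  · have hpt : ∀ x,
        ENNReal.ofReal |ω x * (l / κ * φ x)| ^ p x ≤ φ x * (ENNReal.ofReal κ)⁻¹ := by
      intro x
      have hωx := hω x
      by_cases hx : x ∈ B
      · have hle : (φ x : ℝ) ≤ ((ω x)⁻¹ / l) ^ conjExp (p x) := by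
          have := hφF x
          rw [indicator_of_mem hx, abs_of_pos (by positivity),
            ENNReal.ofReal_rpow_of_nonneg (by positivity) (hp' x).le,
            ← ENNReal.ofReal_coe_nnreal] at this
          exact (ENNReal.ofReal_le_ofReal_iff (by positivity)).mp this
        rw [abs_of_nonneg (by positivity),
          ENNReal.ofReal_rpow_of_nonneg (by positivity) (by linarith [hp x]),
          ← ENNReal.ofReal_coe_nnreal, ← ENNReal.ofReal_inv_of_pos (by linarith),
          ← ENNReal.ofReal_mul (by positivity), ← div_eq_mul_inv]
        exact ENNReal.ofReal_le_ofReal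
          (rpow_mul_le_div_of_le_rpow_conjExp (hp x) hωx hl hκ.le (φ x).2 hle)
      · simp [hφB x hx, ENNReal.zero_rpow_of_pos (by linarith [hp x] : 0 < p x)]
    calc ∫⁻ x, ENNReal.ofReal |ω x * (l / κ * φ x)| ^ p x ∂μ
        ≤ ∫⁻ x, φ x * (ENNReal.ofReal κ)⁻¹ ∂μ := lintegral_mono hpt
      _ = (∫⁻ x, φ x ∂μ) * (ENNReal.ofReal κ)⁻¹ :=
          lintegral_mul_const' _ _
            (ENNReal.inv_ne_top.mpr (ENNReal.ofReal_pos.mpr (by linarith)).ne')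
      _ = 1 := by
          rw [ENNReal.ofReal_toReal hφtop,
            ENNReal.mul_inv_cancel (zero_lt_one.trans hφ1).ne' hφtop]
  · rw [integral_const_mul, setIntegral_coe_eq_toReal_lintegral φ hφB]
    exact div_mul_cancel₀ l (by positivity)

/-- The quantity whose supremum over balls `B` is `[ω⃗]_{A_{p⃗(·),q(·)}}`. -/
def multiweightBallConst (μ : Measure X) (η : ℝ) {m : ℕ} (p : Fin m → X → ℝ) (q : X → ℝ)
    (ω : Fin m → X → ℝ) (w : X → ℝ) (B : Set X) : ℝ :=
  (μ B).toReal ^ (η - (m : ℝ)) * luxNorm μ q (B.indicator w) *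
    ∏ i, luxNorm μ (fun y => conjExp (p i y)) (B.indicator fun y => (ω i y)⁻¹)

variable {η : ℝ} {m : ℕ} {p : Fin m → X → ℝ} {q : X → ℝ} {ω : Fin m → X → ℝ} {w : X → ℝ}
  {B : Set X}

lemma multiweightBallConst_eq_zero_of_not_pos (hηm : η < m)
    (hpos : ¬(0 < (μ B).toReal ∧ ∀ i,
      0 < luxNorm μ (fun y => conjExp (p i y)) (B.indicator fun y => (ω i y)⁻¹))) :
    multiweightBallConst μ η p q ω w B = 0 := by
  simp only [not_and_or, not_forall, not_lt] at hpos
  rcases hpos with hM | ⟨i, hi⟩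
  · rw [multiweightBallConst, le_antisymm hM toReal_nonneg, Real.zero_rpow (by linarith),
      zero_mul, zero_mul]
  · rw [multiweightBallConst, Finset.prod_eq_zero (Finset.mem_univ i)
      (le_antisymm hi (luxNorm_nonneg _ _)), mul_zero]

theorem multiweightBallConst_le_of_weak_bound {N : ℝ} (hηm : η < m)
    (hp : ∀ i x, 1 < p i x) (hω : ∀ i x, 0 < ω i x) (hN : 0 ≤ N)
    (hweak : ∀ (f : Fin m → X → ℝ) (t : ℝ), 0 < t →
      t * luxNorm μ q ({x | t < fracAvg μ η m B f x}.indicator w)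
        ≤ N * ∏ i, luxNorm μ (p i) (fun x => ω i x * f i x)) :
    multiweightBallConst μ η p q ω w B ≤ 2 ^ (m + 1) * N := by
  by_cases hpos : 0 < (μ B).toReal ∧ ∀ i,
      0 < luxNorm μ (fun y => conjExp (p i y)) (B.indicator fun y => (ω i y)⁻¹)
  swap
  · rw [multiweightBallConst_eq_zero_of_not_pos hηm hpos]
    positivity
  set M := (μ B).toReal
  set W := luxNorm μ q (B.indicator w)
  set L : Fin m → ℝ := fun i =>
    luxNorm μ (fun y => conjExp (p i y)) (B.indicator fun y => (ω i y)⁻¹)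
  obtain ⟨hM, hL⟩ := hpos
  have hB : μ B ≠ ∞ := (ENNReal.toReal_pos_iff.mp hM).2.ne
  choose f hfnorm hfint using fun i =>
    exists_luxNorm_mul_le_one_setIntegral_eq hB (hp i) (hω i) (half_pos (hL i))
      (half_lt_self (hL i))
  set V := M ^ η * ∏ i, M⁻¹ * (L i / 2)
  have hV : 0 < V :=
    mul_pos (Real.rpow_pos_of_pos hM _) (Finset.prod_pos fun i _ => by have := hL i; positivity)
  have hlevel : {x | V / 2 < fracAvg μ η m B f x} = B := by
    have : fracAvg μ η m B f = B.indicator fun _ => V := by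
      funext x
      simp only [fracAvg, hfint]
      rfl
    rw [this]
    exact setOf_lt_indicator_const (half_pos hV).le (half_lt_self hV)
  have hVW : V / 2 * W ≤ N :=
    calc V / 2 * W ≤ N * ∏ i, luxNorm μ (p i) (fun x => ω i x * f i x) :=
          by simpa only [hlevel] using hweak f _ (half_pos hV)
      _ ≤ N := mul_le_of_le_one_right hN
          (Finset.prod_le_one (fun i _ => luxNorm_nonneg _ _) fun i _ => hfnorm i)
  calc multiweightBallConst μ η p q ω w B = 2 ^ (m + 1) * (V / 2 * W) := by
        change M ^ (η - m) * W * ∏ i, L i = _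
        simp only [V, Real.rpow_sub hM, Real.rpow_natCast, Finset.prod_mul_distrib,
          Finset.prod_div_distrib, Finset.prod_const, Finset.card_univ, Fintype.card_fin,
          inv_pow]
        field_simp
        ring
    _ ≤ 2 ^ (m + 1) * N := by gcongr

end VariableLebesgue

theorem fracAvg_weak_bound_implies_multiweight_general
    {X : Type*} [MeasurableSpace X] (d : X → X → ℝ) (μ : Measure X)
    (m : ℕ)
    (p : Fin m → X → ℝ) (q : X → ℝ) (η : ℝ)
    (hηm : η < m)
    (hp_lo : ∀ i x, 1 < p i x) :
    ∃ c : ℝ, 0 < c ∧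
      ∀ (ω : Fin m → X → ℝ) (w : X → ℝ) (N : ℝ),
        (∀ i x, 0 < ω i x) → (∀ x, 0 < w x) → 0 < N →
        -- uniform weak-type bound for `𝒜_{η,B}` with operator norm at most `N`
        (∀ (f : Fin m → X → ℝ) (z : X) (r : ℝ) (t : ℝ), 0 < r → 0 < t →
          t * luxNorm μ q
              ({x | t < fracAvg μ η m (qball d z r) f x}.indicator w)
            ≤ N * ∏ i, luxNorm μ (p i) (fun x => ω i x * f i x)) →
        -- conclusion: `[ω⃗]_{A_{p⃗(·),q(·)}} ≲ N`
        ∀ z r, 0 < r →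
          ((μ (qball d z r)).toReal) ^ (η - (m : ℝ)) *
            luxNorm μ q ((qball d z r).indicator w) *
            ∏ i, luxNorm μ (fun y => conjExp (p i y))
              ((qball d z r).indicator fun y => (ω i y)⁻¹) ≤ c * N :=
  ⟨2 ^ (m + 1), by positivity, fun _ _ _ hω _ hN hweak z r hr =>
    multiweightBallConst_le_of_weak_bound hηm hp_lo hω hN.le fun f t ht => hweak f z r t hr ht⟩

/-- Necessity: if the averaging operators `𝒜_{η,B}` are uniformly bounded from
`∏ᵢ L^{pᵢ(·)}(X,ωᵢ)` into weak-`L^{q(·)}(X,ω)`, then `ω⃗ ∈ A_{p⃗(·),q(·)}(X)` with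
`[ω⃗]_{A_{p⃗(·),q(·)}} ≲ sup_B ‖𝒜_{η,B}‖`, the implicit constant being
independent of `ω⃗`. -/
theorem fracAvg_weak_bound_implies_multiweight
    {X : Type*} [MeasurableSpace X] (d : X → X → ℝ) (μ : Measure X)
    (m : ℕ) (hm : 0 < m)
    (p : Fin m → X → ℝ) (q : X → ℝ) (η : ℝ)
    (hη0 : 0 ≤ η) (hηm : η < m)
    (hp_lo : ∀ i x, 1 < p i x) (hp_hi : ∃ P : ℝ, ∀ i x, p i x ≤ P)
    (hq : ∀ x, 1 / q x = (∑ i, 1 / p i x) - η) :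
    ∃ c : ℝ, 0 < c ∧
      ∀ (ω : Fin m → X → ℝ) (w : X → ℝ) (N : ℝ),
        (∀ i x, 0 < ω i x) → (∀ x, 0 < w x) → 0 < N →
        -- uniform weak-type bound for `𝒜_{η,B}` with operator norm at most `N`
        (∀ (f : Fin m → X → ℝ) (z : X) (r : ℝ) (t : ℝ), 0 < r → 0 < t →
          t * luxNorm μ q
              ({x | t < fracAvg μ η m (qball d z r) f x}.indicator w)
            ≤ N * ∏ i, luxNorm μ (p i) (fun x => ω i x * f i x)) →
        -- conclusion: `[ω⃗]_{A_{p⃗(·),q(·)}} ≲ N`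
        ∀ z r, 0 < r →
          ((μ (qball d z r)).toReal) ^ (η - (m : ℝ)) *
            luxNorm μ q ((qball d z r).indicator w) *
            ∏ i, luxNorm μ (fun y => conjExp (p i y))
              ((qball d z r).indicator fun y => (ω i y)⁻¹) ≤ c * N :=
  fracAvg_weak_bound_implies_multiweight_general d μ m p q η hηm hp_lo
end
end

section
/- In the setting of the multilinear dyadic Calderón–Zygmund decomposition: let {Q_j^k} be the CZ cubes at heights a^k for k ∈ ℤ, where a > C_{CZ}, and set E_j^k := Q_j^k \ {ℳ_{η,𝚟}^𝒟(f⃗) > a^{k+1}}. Then the sets E_j^k are pairwise disjoint over all j, k, and (1 − (C_{CZ}/a)^{1/(m−η)}) 𝚟(Q_j^k) ≤ 𝚟(E_j^k) ≤ 𝚟(Q_j^k). -/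
/-! Points of `E_j^k` lie in `{ℳ > a^k}` but not in `{ℳ > a^{k+1}}`, which separates different
heights, and CZ cubes of one height are disjoint.

For the measure bound fix `P = Q_j^k`, put `p = m - η` and `Π(S) = ∏ᵢ ∫_S |fᵢ| 𝚟 dμ`. Every cube
`R` of height `k+1` meeting `P` lies inside `P`, and the CZ bounds read `a^{k+1} 𝚟(R)^p ≤ Π(R)` and
`Π(P) ≤ C_{CZ} a^k 𝚟(P)^p`. Since `Π(R) ≤ Π(P)` and `1/m ≤ 1/p`, this gives
`𝚟(R) ≤ a^{-(k+1)/p} Π(P)^{1/p - 1/m} Π(R)^{1/m}`, and Hölder's inequality for the `m` sums over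
the disjoint `R ⊆ P` gives `∑_R Π(R)^{1/m} ≤ Π(P)^{1/m}`. Hence
`𝚟(P ∩ {ℳ > a^{k+1}}) ≤ (C_{CZ}/a)^{1/p} 𝚟(P)`. -/

noncomputable section
open MeasureTheory ENNReal Set

/-- the measure `v dμ` of a set -/
def wInt {X : Type*} [MeasurableSpace X] (μ : Measure X) (w : X → ℝ) (E : Set X) : ℝ≥0∞ :=
  ∫⁻ x in E, ENNReal.ofReal (w x) ∂μ

/-- the quantity `v(Q)^{η−m} ∏ᵢ ∫_Q |fᵢ| v dμ` -/
def czQty {X : Type*} [MeasurableSpace X] (μ : Measure X) (v : X → ℝ) (η : ℝ)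
    (m : ℕ) (f : Fin m → X → ℝ) (Q : Set X) : ℝ≥0∞ :=
  (wInt μ v Q) ^ (η - (m : ℝ)) * ∏ i, ∫⁻ y in Q, ENNReal.ofReal (|f i y| * v y) ∂μ

/-- multilinear weighted dyadic fractional maximal operator `ℳ_{η,v}^𝒟` -/
def MMD {X : Type*} [MeasurableSpace X] (𝒟 : Set (Set X)) (μ : Measure X)
    (v : X → ℝ) (η : ℝ) (m : ℕ) (f : Fin m → X → ℝ) (x : X) : ℝ≥0∞ :=
  ⨆ (Q : Set X) (_ : Q ∈ 𝒟) (_ : x ∈ Q), czQty μ v η m f Q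

open Function

namespace ENNReal

theorem tsum_prod_rpow_le_prod_tsum_rpow {ι κ : Type*} (s : Finset ι) (g : ι → κ → ℝ≥0∞)
    {w : ι → ℝ} (hw : ∑ i ∈ s, w i = 1) (hw0 : ∀ i ∈ s, 0 ≤ w i) :
    ∑' j, ∏ i ∈ s, g i j ^ w i ≤ ∏ i ∈ s, (∑' j, g i j) ^ w i := by
  let _ : MeasurableSpace κ := ⊤
  simpa only [lintegral_count' measurable_from_top] using
    lintegral_prod_norm_pow_le (μ := Measure.count) s
      (fun i _ => measurable_from_top.aemeasurable) hw hw0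

theorem ne_zero_and_ne_top_of_rpow_neg_mul {A B : ℝ≥0∞} {p : ℝ} (hp : 0 < p)
    (h0 : A ^ (-p) * B ≠ 0) (htop : A ^ (-p) * B ≠ ∞) : A ≠ 0 ∧ A ≠ ∞ := by
  refine ⟨fun hA => ?_, fun hA => ?_⟩
  · rw [hA, zero_rpow_of_neg (neg_neg_of_pos hp)] at h0 htop
    exact htop (top_mul (right_ne_zero_of_mul h0))
  · rw [hA, top_rpow_of_neg (neg_neg_of_pos hp), zero_mul] at h0
    exact h0 rfl

theorem rpow_mul_rpow_neg_mul {A B : ℝ≥0∞} {p : ℝ} (hp : 0 < p)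
    (h0 : A ^ (-p) * B ≠ 0) (htop : A ^ (-p) * B ≠ ∞) : A ^ p * (A ^ (-p) * B) = B := by
  obtain ⟨hA0, hAtop⟩ := ne_zero_and_ne_top_of_rpow_neg_mul hp h0 htop
  rw [← mul_assoc, ← rpow_add _ _ hA0 hAtop, add_neg_cancel, rpow_zero, one_mul]

end ENNReal

theorem measure_iUnion_le_of_mul_rpow_le_prod {X ι : Type*} [MeasurableSpace X] [Countable ι]
    {m : ℕ} (ν : Measure X) (ν' : Fin m → Measure X) {P : Set X} {R : ι → Set X}
    (hRP : ∀ j, R j ⊆ P) (hRmeas : ∀ j, MeasurableSet (R j))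
    (hRdisj : Pairwise (Disjoint on R)) {p : ℝ} (hp : 0 < p) (hpm : p ≤ m)
    {c d : ℝ≥0∞} (hc0 : c ≠ 0) (hctop : c ≠ ∞)
    (hR : ∀ j, c * ν (R j) ^ p ≤ ∏ i, ν' i (R j)) (hP : ∏ i, ν' i P ≤ d * ν P ^ p) :
    ν (⋃ j, R j) ≤ (d / c) ^ p⁻¹ * ν P := by
  have hm : (0 : ℝ) < m := hp.trans_le hpm
  set s : ℝ := (m : ℝ)⁻¹
  set q : ℝ := p⁻¹
  have hs : 0 ≤ s := by positivity
  have hsq : 0 ≤ q - s := sub_nonneg.2 (inv_anti₀ hp hpm)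
  have holder : ∑' j, (∏ i, ν' i (R j)) ^ s ≤ (∏ i, ν' i P) ^ s := by
    calc ∑' j, (∏ i, ν' i (R j)) ^ s = ∑' j, ∏ i, ν' i (R j) ^ s := by
          simp_rw [prod_rpow_of_nonneg hs]
      _ ≤ ∏ i, (∑' j, ν' i (R j)) ^ s :=
          tsum_prod_rpow_le_prod_tsum_rpow _ _ (by simp [s, hm.ne']) (fun _ _ => hs)
      _ ≤ ∏ i, ν' i P ^ s := by
          gcongr with i
          exact (tsum_meas_le_meas_iUnion_of_disjoint _ hRmeas hRdisj).trans
            (measure_mono (iUnion_subset hRP))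
      _ = (∏ i, ν' i P) ^ s := prod_rpow_of_nonneg hs
  have hRle : ∀ j, ν (R j) ≤ c⁻¹ ^ q * (∏ i, ν' i P) ^ (q - s) * (∏ i, ν' i (R j)) ^ s := by
    intro j
    calc ν (R j) = (ν (R j) ^ p) ^ q := by rw [← rpow_mul, mul_inv_cancel₀ hp.ne', rpow_one]
      _ = (c⁻¹ * (c * ν (R j) ^ p)) ^ q := by rw [ENNReal.inv_mul_cancel_left hc0 hctop]
      _ ≤ (c⁻¹ * ∏ i, ν' i (R j)) ^ q := by gcongr; exact hR j
      _ = c⁻¹ ^ q * (∏ i, ν' i (R j)) ^ (q - s) * (∏ i, ν' i (R j)) ^ s := by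
          rw [mul_rpow_of_nonneg _ _ (by positivity), mul_assoc, ← rpow_add_of_nonneg _ _ hsq hs,
            sub_add_cancel]
      _ ≤ c⁻¹ ^ q * (∏ i, ν' i P) ^ (q - s) * (∏ i, ν' i (R j)) ^ s := by
          gcongr; exact hRP j
  calc ν (⋃ j, R j) ≤ ∑' j, ν (R j) := measure_iUnion_le _
    _ ≤ ∑' j, c⁻¹ ^ q * (∏ i, ν' i P) ^ (q - s) * (∏ i, ν' i (R j)) ^ s :=
        ENNReal.tsum_le_tsum hRle
    _ = c⁻¹ ^ q * (∏ i, ν' i P) ^ (q - s) * ∑' j, (∏ i, ν' i (R j)) ^ s :=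
        ENNReal.tsum_mul_left
    _ ≤ c⁻¹ ^ q * (∏ i, ν' i P) ^ (q - s) * (∏ i, ν' i P) ^ s := by gcongr
    _ = c⁻¹ ^ q * (∏ i, ν' i P) ^ q := by
        rw [mul_assoc, ← rpow_add_of_nonneg _ _ hsq hs, sub_add_cancel]
    _ ≤ c⁻¹ ^ q * (d * ν P ^ p) ^ q := by gcongr
    _ = (d / c) ^ q * ν P := by
        rw [mul_rpow_of_nonneg _ _ (by positivity), ← rpow_mul, mul_inv_cancel₀ hp.ne', rpow_one,
          div_eq_mul_inv, mul_rpow_of_nonneg _ _ (by positivity)]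
        ring

theorem ofReal_one_sub_mul_le_measure_sdiff {X : Type*} [MeasurableSpace X] {ν : Measure X}
    {s t : Set X} {r : ℝ} (hr : 0 ≤ r) (hs : ν s ≠ ∞) (h : ν (s ∩ t) ≤ ENNReal.ofReal r * ν s) :
    ENNReal.ofReal (1 - r) * ν s ≤ ν (s \ t) := by
  rw [ofReal_sub _ hr, ofReal_one, ENNReal.sub_mul (fun _ _ => hs), one_mul]
  exact (tsub_le_tsub_left h _).trans (tsub_le_iff_left.2 (measure_le_inter_add_sdiff ν s t))

theorem disjoint_sdiff_succ_of_antitone {X : Type*} {Xs : ℤ → Set X} (hXs : Antitone Xs)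
    {Q : ℤ → ℕ → Set X} (hQX : ∀ k j, Q k j ⊆ Xs k) (hQdisj : ∀ k, Pairwise (Disjoint on Q k))
    {k k' : ℤ} {j j' : ℕ} (hne : (k, j) ≠ (k', j')) :
    Disjoint (Q k j \ Xs (k + 1)) (Q k' j' \ Xs (k' + 1)) := by
  have below : ∀ {k k' : ℤ} (j j' : ℕ), k < k' →
      Disjoint (Q k j \ Xs (k + 1)) (Q k' j' \ Xs (k' + 1)) := fun j j' hlt =>
    disjoint_sdiff_left.mono_right (sdiff_subset.trans ((hQX _ j').trans (hXs hlt)))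
  rcases lt_trichotomy k k' with hlt | rfl | hgt
  · exact below j j' hlt
  · exact (hQdisj k fun h => hne (by rw [h])).mono sdiff_subset sdiff_subset
  · exact (below j' j hgt).symm

theorem czQty_eq_rpow_neg_mul {X : Type*} [MeasurableSpace X] (μ : Measure X) (v : X → ℝ)
    (η : ℝ) (m : ℕ) (f : Fin m → X → ℝ) (S : Set X) :
    czQty μ v η m f S =
      wInt μ v S ^ (-((m : ℝ) - η)) * ∏ i, ∫⁻ y in S, ENNReal.ofReal (|f i y| * v y) ∂μ := by
  rw [neg_sub, czQty]

structure IsCZFamily {X : Type*} [MeasurableSpace X] (𝒟 : Set (Set X)) (μ : Measure X)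
    (v : X → ℝ) (η : ℝ) (m : ℕ) (f : Fin m → X → ℝ) (a CCZ : ℝ) (Q : ℤ → ℕ → Set X) : Prop where
  mem : ∀ k j, Q k j ≠ ∅ → Q k j ∈ 𝒟
  disjoint : ∀ k, Pairwise (Disjoint on Q k)
  cover : ∀ k : ℤ, {x | ENNReal.ofReal (a ^ k) < MMD 𝒟 μ v η m f x} = ⋃ j, Q k j
  bounds : ∀ k j, Q k j ≠ ∅ →
    ENNReal.ofReal (a ^ k) < czQty μ v η m f (Q k j) ∧
      czQty μ v η m f (Q k j) ≤ ENNReal.ofReal (CCZ * a ^ k)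
  nest : ∀ k j, Q (k + 1) j ≠ ∅ → ∃ j', Q (k + 1) j ⊆ Q k j'

namespace IsCZFamily

variable {X : Type*} [MeasurableSpace X] {𝒟 : Set (Set X)} {μ : Measure X} {v : X → ℝ} {η : ℝ}
  {m : ℕ} {f : Fin m → X → ℝ} {a CCZ : ℝ} {Q : ℤ → ℕ → Set X}

theorem subset_superlevel (hQ : IsCZFamily 𝒟 μ v η m f a CCZ Q) (k : ℤ) (j : ℕ) :
    Q k j ⊆ {x | ENNReal.ofReal (a ^ k) < MMD 𝒟 μ v η m f x} :=
  hQ.cover k ▸ subset_iUnion (Q k) j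

theorem measurableSet (hQ : IsCZFamily 𝒟 μ v η m f a CCZ Q)
    (hmeas : ∀ S ∈ 𝒟, MeasurableSet S) (k : ℤ) (j : ℕ) : MeasurableSet (Q k j) := by
  rcases eq_or_ne (Q k j) ∅ with h | h
  · exact h ▸ .empty
  · exact hmeas _ (hQ.mem k j h)

theorem subset_of_inter_nonempty (hQ : IsCZFamily 𝒟 μ v η m f a CCZ Q) {k : ℤ} {j j' : ℕ}
    (h : (Q k j ∩ Q (k + 1) j').Nonempty) : Q (k + 1) j' ⊆ Q k j := by
  obtain ⟨x, hxP, hxR⟩ := h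
  obtain ⟨j'', hsub⟩ := hQ.nest k j' (nonempty_of_mem hxR).ne_empty
  obtain rfl : j'' = j := by
    by_contra hne
    exact disjoint_left.1 (hQ.disjoint k hne) (hsub hxR) hxP
  exact hsub

theorem czQty_ne_zero (hQ : IsCZFamily 𝒟 μ v η m f a CCZ Q) {k : ℤ} {j : ℕ} (h : Q k j ≠ ∅) :
    czQty μ v η m f (Q k j) ≠ 0 :=
  (hQ.bounds k j h).1.ne_bot

theorem czQty_ne_top (hQ : IsCZFamily 𝒟 μ v η m f a CCZ Q) {k : ℤ} {j : ℕ} (h : Q k j ≠ ∅) :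
    czQty μ v η m f (Q k j) ≠ ∞ :=
  ne_top_of_le_ne_top ofReal_ne_top (hQ.bounds k j h).2

theorem wInt_ne_top (hQ : IsCZFamily 𝒟 μ v η m f a CCZ Q) (hηm : η < m) {k : ℤ} {j : ℕ}
    (h : Q k j ≠ ∅) : wInt μ v (Q k j) ≠ ∞ := by
  have h0 := hQ.czQty_ne_zero h
  have htop := hQ.czQty_ne_top h
  rw [czQty_eq_rpow_neg_mul] at h0 htop
  exact (ne_zero_and_ne_top_of_rpow_neg_mul (sub_pos.2 hηm) h0 htop).2

theorem prod_lintegral_eq_wInt_rpow_mul_czQty (hQ : IsCZFamily 𝒟 μ v η m f a CCZ Q)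
    (hηm : η < m) {k : ℤ} {j : ℕ} (h : Q k j ≠ ∅) :
    ∏ i, ∫⁻ y in Q k j, ENNReal.ofReal (|f i y| * v y) ∂μ =
      wInt μ v (Q k j) ^ ((m : ℝ) - η) * czQty μ v η m f (Q k j) := by
  have h0 := hQ.czQty_ne_zero h
  have htop := hQ.czQty_ne_top h
  rw [czQty_eq_rpow_neg_mul] at h0 htop ⊢
  exact (rpow_mul_rpow_neg_mul (sub_pos.2 hηm) h0 htop).symm

theorem withDensity_inter_superlevel_le (hQ : IsCZFamily 𝒟 μ v η m f a CCZ Q)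
    (hmeas : ∀ S ∈ 𝒟, MeasurableSet S) (hη0 : 0 ≤ η) (hηm : η < m) (ha : 0 < a) (hC : 0 ≤ CCZ)
    {k : ℤ} {j : ℕ} (h : Q k j ≠ ∅) :
    μ.withDensity (fun x => ENNReal.ofReal (v x))
        (Q k j ∩ {x | ENNReal.ofReal (a ^ (k + 1)) < MMD 𝒟 μ v η m f x}) ≤
      ENNReal.ofReal ((CCZ / a) ^ (1 / ((m : ℝ) - η))) *
        μ.withDensity (fun x => ENNReal.ofReal (v x)) (Q k j) := by
  have hmeasQ := hQ.measurableSet hmeas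
  have hp : 0 < (m : ℝ) - η := sub_pos.2 hηm
  rw [hQ.cover, inter_iUnion]
  refine (measure_iUnion_le_of_mul_rpow_le_prod _
    (fun i => μ.withDensity fun y => ENNReal.ofReal (|f i y| * v y)) (fun _ => inter_subset_left)
    (fun j' => (hmeasQ k j).inter (hmeasQ _ j'))
    (fun _ _ hne => (hQ.disjoint _ hne).mono inter_subset_right inter_subset_right) hp
    (by linarith) (c := ENNReal.ofReal (a ^ (k + 1))) (d := ENNReal.ofReal (CCZ * a ^ k))
    (by positivity) ofReal_ne_top ?hR ?hP).trans_eq ?const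
  case hR =>
    intro j'
    rcases (Q k j ∩ Q (k + 1) j').eq_empty_or_nonempty with h' | h'
    · simp [h', zero_rpow_of_pos hp]
    have hne' : Q (k + 1) j' ≠ ∅ := (h'.mono inter_subset_right).ne_empty
    simp only [inter_eq_right.2 (hQ.subset_of_inter_nonempty h'), withDensity_apply _ (hmeasQ _ j')]
    rw [← wInt, hQ.prod_lintegral_eq_wInt_rpow_mul_czQty hηm hne', mul_comm]
    gcongr
    exact (hQ.bounds _ _ hne').1.le
  case hP =>
    simp only [withDensity_apply _ (hmeasQ k j)]
    rw [← wInt, hQ.prod_lintegral_eq_wInt_rpow_mul_czQty hηm h, mul_comm]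
    gcongr
    exact (hQ.bounds _ _ h).2
  case const =>
    rw [← ofReal_div_of_pos (by positivity),
      ofReal_rpow_of_nonneg (by positivity) (by positivity), one_div, zpow_add_one₀ ha.ne',
      mul_comm (a ^ k) a, mul_div_mul_right _ _ (zpow_ne_zero k ha.ne')]

theorem ofReal_one_sub_mul_wInt_le_wInt_sdiff (hQ : IsCZFamily 𝒟 μ v η m f a CCZ Q)
    (hmeas : ∀ S ∈ 𝒟, MeasurableSet S) (hη0 : 0 ≤ η) (hηm : η < m) (ha : 0 < a) (hC : 0 ≤ CCZ)
    {k : ℤ} {j : ℕ} (h : Q k j ≠ ∅) :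
    ENNReal.ofReal (1 - (CCZ / a) ^ (1 / ((m : ℝ) - η))) * wInt μ v (Q k j) ≤
      wInt μ v (Q k j \ {x | ENNReal.ofReal (a ^ (k + 1)) < MMD 𝒟 μ v η m f x}) := by
  have hP := hQ.measurableSet hmeas k j
  have hX : MeasurableSet {x | ENNReal.ofReal (a ^ (k + 1)) < MMD 𝒟 μ v η m f x} :=
    hQ.cover (k + 1) ▸ .iUnion (hQ.measurableSet hmeas _)
  have hfin := hQ.wInt_ne_top hηm h
  rw [wInt, ← withDensity_apply _ hP] at hfin ⊢
  rw [wInt, ← withDensity_apply _ (hP.diff hX)]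
  exact ofReal_one_sub_mul_le_measure_sdiff (by positivity) hfin
    (hQ.withDensity_inter_superlevel_le hmeas hη0 hηm ha hC h)

end IsCZFamily

theorem CZ_exceptional_sets_general
    {X : Type*} [MeasurableSpace X] (𝒟 : Set (Set X)) (μ : Measure X)
    (hmeas : ∀ Q ∈ 𝒟, MeasurableSet Q)
    (m : ℕ) (η : ℝ) (hη0 : 0 ≤ η) (hηm : η < m)
    (v : X → ℝ)
    (f : Fin m → X → ℝ)
    (a CCZ : ℝ) (hCCZ : 1 < CCZ) (ha : CCZ < a)
    -- CZ cubes at heights `a^k`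
    (Q : ℤ → ℕ → Set X)
    (hQmem : ∀ k j, Q k j ≠ ∅ → Q k j ∈ 𝒟)
    (hQdisj : ∀ k, ∀ j j' : ℕ, j ≠ j' → Disjoint (Q k j) (Q k j'))
    (hQcover : ∀ k : ℤ,
      {x | ENNReal.ofReal (a ^ k) < MMD 𝒟 μ v η m f x} = ⋃ j, Q k j)
    (hQbounds : ∀ k j, Q k j ≠ ∅ →
      ENNReal.ofReal (a ^ k) < czQty μ v η m f (Q k j) ∧
        czQty μ v η m f (Q k j) ≤ ENNReal.ofReal (CCZ * a ^ k))
    (hQnest : ∀ k j, Q (k + 1) j ≠ ∅ → ∃ j', Q (k + 1) j ⊆ Q k j') :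
    -- the exceptional sets `E_j^k = Q_j^k \ X_{k+1}`
    (∀ k j k' j', (k, j) ≠ (k', j') →
      Disjoint
        (Q k j \ {x | ENNReal.ofReal (a ^ (k + 1)) < MMD 𝒟 μ v η m f x})
        (Q k' j' \ {x | ENNReal.ofReal (a ^ (k' + 1)) < MMD 𝒟 μ v η m f x}))
    ∧
    (∀ k j,
      ENNReal.ofReal (1 - (CCZ / a) ^ (1 / ((m : ℝ) - η))) * wInt μ v (Q k j)
          ≤ wInt μ v (Q k j \ {x | ENNReal.ofReal (a ^ (k + 1)) < MMD 𝒟 μ v η m f x}) ∧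
        wInt μ v (Q k j \ {x | ENNReal.ofReal (a ^ (k + 1)) < MMD 𝒟 μ v η m f x})
          ≤ wInt μ v (Q k j)) := by
  have hQ : IsCZFamily 𝒟 μ v η m f a CCZ Q :=
    ⟨hQmem, fun k _ _ => hQdisj k _ _, hQcover, hQbounds, hQnest⟩
  have hsuperlevel : Antitone fun k : ℤ => {x | ENNReal.ofReal (a ^ k) < MMD 𝒟 μ v η m f x} :=
    fun k k' hk _ hx => (ofReal_le_ofReal (zpow_le_zpow_right₀ (hCCZ.trans ha).le hk)).trans_lt hx
  refine ⟨fun k j k' j' hne => disjoint_sdiff_succ_of_antitone hsuperlevel hQ.subset_superlevel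
    hQ.disjoint hne, fun k j => ⟨?_, lintegral_mono_set sdiff_subset⟩⟩
  rcases eq_or_ne (Q k j) ∅ with h | h
  · simp [h, wInt]
  exact hQ.ofReal_one_sub_mul_wInt_le_wInt_sdiff hmeas hη0 hηm (by linarith) (by linarith) h

/-- Disjointness and measure comparison for the Calderón–Zygmund exceptional sets:
if `{Q_j^k}` are the CZ cubes at heights `a^k` (`a > C_{CZ}`) and
`E_j^k = Q_j^k \ {ℳ_{η,v}^𝒟(f⃗) > a^{k+1}}`, then the `E_j^k` are pairwise disjoint and
`(1 − (C_{CZ}/a)^{1/(m−η)}) v(Q_j^k) ≤ v(E_j^k) ≤ v(Q_j^k)`. -/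
theorem CZ_exceptional_sets
    {X : Type*} [MeasurableSpace X] (𝒟 : Set (Set X)) (μ : Measure X)
    (hmeas : ∀ Q ∈ 𝒟, MeasurableSet Q)
    (hnested : ∀ Q₁ ∈ 𝒟, ∀ Q₂ ∈ 𝒟, Q₁ ∩ Q₂ = ∅ ∨ Q₁ ⊆ Q₂ ∨ Q₂ ⊆ Q₁)
    (m : ℕ) (hm : 0 < m) (η : ℝ) (hη0 : 0 ≤ η) (hηm : η < m)
    (v : X → ℝ) (hv : ∀ x, 0 < v x)
    (f : Fin m → X → ℝ)
    (a CCZ : ℝ) (hCCZ : 1 < CCZ) (ha : CCZ < a)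
    -- CZ cubes at heights `a^k`
    (Q : ℤ → ℕ → Set X)
    (hQmem : ∀ k j, Q k j ≠ ∅ → Q k j ∈ 𝒟)
    (hQdisj : ∀ k, ∀ j j' : ℕ, j ≠ j' → Disjoint (Q k j) (Q k j'))
    (hQcover : ∀ k : ℤ,
      {x | ENNReal.ofReal (a ^ k) < MMD 𝒟 μ v η m f x} = ⋃ j, Q k j)
    (hQbounds : ∀ k j, Q k j ≠ ∅ →
      ENNReal.ofReal (a ^ k) < czQty μ v η m f (Q k j) ∧
        czQty μ v η m f (Q k j) ≤ ENNReal.ofReal (CCZ * a ^ k))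
    (hQnest : ∀ k j, Q (k + 1) j ≠ ∅ → ∃ j', Q (k + 1) j ⊆ Q k j') :
    -- the exceptional sets `E_j^k = Q_j^k \ X_{k+1}`
    (∀ k j k' j', (k, j) ≠ (k', j') →
      Disjoint
        (Q k j \ {x | ENNReal.ofReal (a ^ (k + 1)) < MMD 𝒟 μ v η m f x})
        (Q k' j' \ {x | ENNReal.ofReal (a ^ (k' + 1)) < MMD 𝒟 μ v η m f x}))
    ∧
    (∀ k j,
      ENNReal.ofReal (1 - (CCZ / a) ^ (1 / ((m : ℝ) - η))) * wInt μ v (Q k j)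
          ≤ wInt μ v (Q k j \ {x | ENNReal.ofReal (a ^ (k + 1)) < MMD 𝒟 μ v η m f x}) ∧
        wInt μ v (Q k j \ {x | ENNReal.ofReal (a ^ (k + 1)) < MMD 𝒟 μ v η m f x})
          ≤ wInt μ v (Q k j)) :=
  CZ_exceptional_sets_general 𝒟 μ hmeas m η hη0 hηm v f a CCZ hCCZ ha Q hQmem hQdisj hQcover
    hQbounds hQnest
end
end
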